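/- arXiv:1904.08541 — 2 statements merged into one kernel-verified Lean document; each statement's English description precedes it below -/
import Mathlib

section
/- Let M be a monoidal category and (C, Φ, φ·, φ) a metamodel of M in C such that for each X ∈ M and A ∈ C the functor Φ_X(A, −) : C → SET is representable. Then there exists an oplax action (∗, ε, δ) of M on C and a natural isomorphism C(X ∗ A, B) ≅ Φ_X(A, B) compatible with the unit and multiplication structures; that is, the metamodel induced by this oplax action is isomorphic to (Φ, φ·, φ). -/
open CategoryTheory CategoryTheory.MonoidalCategory

universe w v₁ v₂ u₁ u₂

/-- A metamodel of a monoidal category `M` in a category `C`: a functor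
`Φ : M^op × C^op × C ⥤ SET` equipped with unit and multiplication natural
transformations satisfying coherence, i.e. an oplax monoidal functor from `M^op` to the
monoidal category of endo-profunctors on `C`. -/
structure Metamodel (M : Type u₁) [Category.{v₁} M] [MonoidalCategory M]
    (C : Type u₂) [Category.{v₂} C] where
  Φ : M → C → C → Type w
  mapM : ∀ {X Y : M}, (X ⟶ Y) → ∀ (A B : C), Φ Y A B → Φ X A B
  mapL : ∀ (X : M) {A A' : C}, (A ⟶ A') → ∀ (B : C), Φ X A' B → Φ X A B
  mapR : ∀ (X : M) (A : C) {B B' : C}, (B ⟶ B') → Φ X A B → Φ X A B'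
  mapM_id : ∀ (X : M) (A B : C) (x : Φ X A B), mapM (𝟙 X) A B x = x
  mapM_comp : ∀ {X Y Z : M} (f : X ⟶ Y) (g : Y ⟶ Z) (A B : C) (x : Φ Z A B),
    mapM f A B (mapM g A B x) = mapM (f ≫ g) A B x
  mapL_id : ∀ (X : M) (A B : C) (x : Φ X A B), mapL X (𝟙 A) B x = x
  mapL_comp : ∀ (X : M) {A A' A'' : C} (f : A ⟶ A') (g : A' ⟶ A'') (B : C) (x : Φ X A'' B),
    mapL X f B (mapL X g B x) = mapL X (f ≫ g) B x
  mapR_id : ∀ (X : M) (A B : C) (x : Φ X A B), mapR X A (𝟙 B) x = x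
  mapR_comp : ∀ (X : M) (A : C) {B B' B'' : C} (f : B ⟶ B') (g : B' ⟶ B'') (x : Φ X A B),
    mapR X A g (mapR X A f x) = mapR X A (f ≫ g) x
  mapLR_comm : ∀ (X : M) {A A' B B' : C} (f : A ⟶ A') (g : B ⟶ B') (x : Φ X A' B),
    mapR X A g (mapL X f B x) = mapL X f B' (mapR X A' g x)
  mapML_comm : ∀ {X Y : M} (u : X ⟶ Y) {A A' : C} (f : A ⟶ A') (B : C) (x : Φ Y A' B),
    mapM u A B (mapL Y f B x) = mapL X f B (mapM u A' B x)
  mapMR_comm : ∀ {X Y : M} (u : X ⟶ Y) (A : C) {B B' : C} (g : B ⟶ B') (x : Φ Y A B),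
    mapM u A B' (mapR Y A g x) = mapR X A g (mapM u A B x)
  unit : ∀ C₀ : C, Φ (𝟙_ M) C₀ C₀
  mult : ∀ {X Y : M} {A B C₀ : C}, Φ Y B C₀ → Φ X A B → Φ (Y ⊗ X) A C₀
  unit_natural : ∀ {A B : C} (f : A ⟶ B),
    mapL (𝟙_ M) f B (unit B) = mapR (𝟙_ M) A f (unit A)
  mult_mapM : ∀ {X X' Y Y' : M} (f : X ⟶ X') (g : Y ⟶ Y') {A B C₀ : C}
    (y : Φ Y' B C₀) (x : Φ X' A B),
    mult (mapM g B C₀ y) (mapM f A B x) = mapM (g ⊗ₘ f) A C₀ (mult y x)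
  mult_mapL : ∀ {X Y : M} {A A' B C₀ : C} (f : A ⟶ A') (y : Φ Y B C₀) (x : Φ X A' B),
    mult y (mapL X f B x) = mapL (Y ⊗ X) f C₀ (mult y x)
  mult_mapR : ∀ {X Y : M} {A B C₀ C₁ : C} (g : C₀ ⟶ C₁) (y : Φ Y B C₀) (x : Φ X A B),
    mult (mapR Y B g y) x = mapR (Y ⊗ X) A g (mult y x)
  mult_mid : ∀ {X Y : M} {A B B' C₀ : C} (g : B ⟶ B') (y : Φ Y B' C₀) (x : Φ X A B),
    mult (mapL Y g C₀ y) x = mult y (mapR X A g x)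
  left_unit : ∀ {X : M} {A B : C} (x : Φ X A B),
    mult (unit B) x = mapM (λ_ X).hom A B x
  right_unit : ∀ {X : M} {A B : C} (x : Φ X A B),
    mult x (unit A) = mapM (ρ_ X).hom A B x
  assoc : ∀ {X Y Z : M} {A B C₀ D : C} (z : Φ Z C₀ D) (y : Φ Y B C₀) (x : Φ X A B),
    mapM (α_ Z Y X).hom A D (mult z (mult y x)) = mult (mult z y) x
/-- An oplax action of a monoidal category `M` on a category `C`: a functor
`∗ : M × C ⥤ C` with natural transformations `ε_A : I ∗ A ⟶ A` and
`δ_{X,Y,A} : (Y ⊗ X) ∗ A ⟶ Y ∗ (X ∗ A)` satisfying two unit axioms and an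
associativity axiom. -/
structure OplaxAction (M : Type u₁) [Category.{v₁} M] [MonoidalCategory M]
    (C : Type u₂) [Category.{v₂} C] where
  act : M → C → C
  actM : ∀ {X Y : M}, (X ⟶ Y) → ∀ A : C, act X A ⟶ act Y A
  actC : ∀ (X : M) {A B : C}, (A ⟶ B) → (act X A ⟶ act X B)
  actM_id : ∀ (X : M) (A : C), actM (𝟙 X) A = 𝟙 (act X A)
  actM_comp : ∀ {X Y Z : M} (f : X ⟶ Y) (g : Y ⟶ Z) (A : C),
    actM (f ≫ g) A = actM f A ≫ actM g A
  actC_id : ∀ (X : M) (A : C), actC X (𝟙 A) = 𝟙 (act X A)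
  actC_comp : ∀ (X : M) {A B D : C} (f : A ⟶ B) (g : B ⟶ D),
    actC X (f ≫ g) = actC X f ≫ actC X g
  act_comm : ∀ {X Y : M} (u : X ⟶ Y) {A B : C} (f : A ⟶ B),
    actM u A ≫ actC Y f = actC X f ≫ actM u B
  ε : ∀ A : C, act (𝟙_ M) A ⟶ A
  ε_natural : ∀ {A B : C} (f : A ⟶ B), ε A ≫ f = actC (𝟙_ M) f ≫ ε B
  δ : ∀ (X Y : M) (A : C), act (Y ⊗ X) A ⟶ act Y (act X A)
  δ_natural : ∀ (X Y : M) {A B : C} (f : A ⟶ B),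
    δ X Y A ≫ actC Y (actC X f) = actC (Y ⊗ X) f ≫ δ X Y B
  oplax_left : ∀ (X : M) (A : C),
    δ X (𝟙_ M) A ≫ ε (act X A) = actM (λ_ X).hom A
  oplax_right : ∀ (X : M) (A : C),
    δ (𝟙_ M) X A ≫ actC X (ε A) = actM (ρ_ X).hom A
  oplax_assoc : ∀ (X Y Z : M) (A : C),
    δ X (Z ⊗ Y) A ≫ δ Y Z (act X A) =
      actM (α_ Z Y X).hom A ≫ δ (Y ⊗ X) Z A ≫ actC Z (δ X Y A)

variable {M : Type u₁} [Category.{v₁} M] [MonoidalCategory M]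
  {C : Type u₂} [Category.{v₂} C]

/-!
Choose for every `X` and `a` a representing object `X ∗ a` of `Φ_X(a, −)`. By Yoneda, a morphism
out of `X ∗ a` is determined by its image in `Φ`, and the image of `h` is `h` pushed forward along
the universal element `η_{X,a} = homEquiv (𝟙 (X ∗ a))`. The functoriality of `∗`, the counit `ε` and the
comultiplication `δ` are the morphisms corresponding to `mapM u η`, `mapL f η`, `φ·` and
`φ(η, η)`; each oplax action axiom is then the image under the Yoneda bijection of the
corresponding metamodel axiom.
-/

namespace Metamodel

/-- A choice of representing objects for all the functors `Φ_X(a, −)`. -/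
structure Representation (mm : Metamodel.{w} M C) where
  obj : M → C → C
  homEquiv : ∀ (X : M) (a b : C), (obj X a ⟶ b) ≃ mm.Φ X a b
  homEquiv_comp : ∀ (X : M) (a : C) {b b' : C} (g : b ⟶ b') (h : obj X a ⟶ b),
    homEquiv X a b' (h ≫ g) = mm.mapR X a g (homEquiv X a b h)

namespace Representation

variable {mm : Metamodel.{w} M C} (P : mm.Representation)

def universal (X : M) (a : C) : mm.Φ X a (P.obj X a) := P.homEquiv X a _ (𝟙 _)

def mapHom {X Y : M} (u : X ⟶ Y) (a : C) : P.obj X a ⟶ P.obj Y a :=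
  (P.homEquiv X a _).symm (mm.mapM u a _ (P.universal Y a))

def mapObj (X : M) {a a' : C} (f : a ⟶ a') : P.obj X a ⟶ P.obj X a' :=
  (P.homEquiv X a _).symm (mm.mapL X f _ (P.universal X a'))

def counit (a : C) : P.obj (𝟙_ M) a ⟶ a := (P.homEquiv (𝟙_ M) a a).symm (mm.unit a)

def comult (X Y : M) (a : C) : P.obj (Y ⊗ X) a ⟶ P.obj Y (P.obj X a) :=
  (P.homEquiv (Y ⊗ X) a _).symm (mm.mult (P.universal Y (P.obj X a)) (P.universal X a))

theorem homEquiv_mapHom {X Y : M} (u : X ⟶ Y) (a : C) :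
    P.homEquiv X a _ (P.mapHom u a) = mm.mapM u a _ (P.universal Y a) :=
  Equiv.apply_symm_apply _ _

theorem homEquiv_mapObj (X : M) {a a' : C} (f : a ⟶ a') :
    P.homEquiv X a _ (P.mapObj X f) = mm.mapL X f _ (P.universal X a') :=
  Equiv.apply_symm_apply _ _

theorem homEquiv_counit (a : C) : P.homEquiv (𝟙_ M) a a (P.counit a) = mm.unit a :=
  Equiv.apply_symm_apply _ _

theorem homEquiv_comult (X Y : M) (a : C) :
    P.homEquiv (Y ⊗ X) a _ (P.comult X Y a) =
      mm.mult (P.universal Y (P.obj X a)) (P.universal X a) :=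
  Equiv.apply_symm_apply _ _

theorem homEquiv_eq_mapR_universal {X : M} {a b : C} (h : P.obj X a ⟶ b) :
    P.homEquiv X a b h = mm.mapR X a h (P.universal X a) := by
  rw [universal, ← P.homEquiv_comp, Category.id_comp]

theorem homEquiv_mapHom_comp {X Y : M} (u : X ⟶ Y) (a : C) {b : C} (h : P.obj Y a ⟶ b) :
    P.homEquiv X a b (P.mapHom u a ≫ h) = mm.mapM u a b (P.homEquiv Y a b h) := by
  rw [P.homEquiv_comp, homEquiv_mapHom, ← mm.mapMR_comm, ← P.homEquiv_eq_mapR_universal]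

theorem homEquiv_mapObj_comp (X : M) {a a' : C} (f : a ⟶ a') {b : C} (h : P.obj X a' ⟶ b) :
    P.homEquiv X a b (P.mapObj X f ≫ h) = mm.mapL X f b (P.homEquiv X a' b h) := by
  rw [P.homEquiv_comp, homEquiv_mapObj, mm.mapLR_comm, ← P.homEquiv_eq_mapR_universal]

theorem homEquiv_comult_comp (X Y : M) (a : C) {c : C} (g : P.obj Y (P.obj X a) ⟶ c) :
    P.homEquiv (Y ⊗ X) a c (P.comult X Y a ≫ g) =
      mm.mult (P.homEquiv Y _ c g) (P.universal X a) := by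
  rw [P.homEquiv_comp, homEquiv_comult, ← mm.mult_mapR, ← P.homEquiv_eq_mapR_universal]

theorem homEquiv_comult_comp_mapObj_comp (X Y : M) (a : C) {b c : C} (f : P.obj X a ⟶ b)
    (g : P.obj Y b ⟶ c) :
    P.homEquiv (Y ⊗ X) a c (P.comult X Y a ≫ P.mapObj Y f ≫ g) =
      mm.mult (P.homEquiv Y b c g) (P.homEquiv X a b f) := by
  rw [homEquiv_comult_comp, homEquiv_mapObj_comp, mm.mult_mid, ← P.homEquiv_eq_mapR_universal]

theorem homEquiv_comult_comp_mapObj (X Y : M) (a : C) {b : C} (f : P.obj X a ⟶ b) :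
    P.homEquiv (Y ⊗ X) a _ (P.comult X Y a ≫ P.mapObj Y f) =
      mm.mult (P.universal Y b) (P.homEquiv X a b f) := by
  have h := P.homEquiv_comult_comp_mapObj_comp X Y a f (𝟙 _)
  rwa [Category.comp_id] at h

def toOplaxAction : OplaxAction M C where
  act := P.obj
  actM := P.mapHom
  actC := P.mapObj
  actM_id X a := (P.homEquiv X a _).injective <| by
    rw [homEquiv_mapHom, mm.mapM_id, universal]
  actM_comp f g a := (P.homEquiv _ a _).injective <| by
    rw [homEquiv_mapHom_comp, homEquiv_mapHom, homEquiv_mapHom, mm.mapM_comp]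
  actC_id X a := (P.homEquiv X a _).injective <| by
    rw [homEquiv_mapObj, mm.mapL_id, universal]
  actC_comp X _ _ _ f g := (P.homEquiv X _ _).injective <| by
    rw [homEquiv_mapObj_comp, homEquiv_mapObj, homEquiv_mapObj, mm.mapL_comp]
  act_comm u _ _ f := (P.homEquiv _ _ _).injective <| by
    rw [homEquiv_mapHom_comp, homEquiv_mapObj_comp, homEquiv_mapObj, homEquiv_mapHom,
      mm.mapML_comm]
  ε := P.counit
  ε_natural f := (P.homEquiv (𝟙_ M) _ _).injective <| by
    rw [P.homEquiv_comp, homEquiv_mapObj_comp, homEquiv_counit, homEquiv_counit,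
      mm.unit_natural]
  δ := P.comult
  δ_natural X Y a _ f := (P.homEquiv (Y ⊗ X) a _).injective <| by
    rw [homEquiv_comult_comp_mapObj, homEquiv_mapObj, homEquiv_mapObj_comp, homEquiv_comult,
      mm.mult_mapL]
  oplax_left X a := (P.homEquiv _ a _).injective <| by
    rw [homEquiv_comult_comp, homEquiv_counit, mm.left_unit, homEquiv_mapHom]
  oplax_right X a := (P.homEquiv _ a _).injective <| by
    rw [homEquiv_comult_comp_mapObj, homEquiv_counit, mm.right_unit, homEquiv_mapHom]
  oplax_assoc X Y Z a := (P.homEquiv _ a _).injective <| by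
    rw [homEquiv_comult_comp, homEquiv_comult, homEquiv_mapHom_comp, homEquiv_comult_comp_mapObj,
      homEquiv_comult, mm.assoc]

end Representation

end Metamodel

/-- If `(C, Φ, φ·, φ)` is a metamodel of `M` such that each functor
`Φ_X(A, −) : C ⥤ SET` is representable, then there is an oplax action `(∗, ε, δ)` of `M`
on `C` and a natural isomorphism `C(X ∗ A, B) ≅ Φ_X(A, B)` compatible with the unit and
multiplication structures, i.e. the metamodel induced by the oplax action is isomorphic
to the given one. -/
theorem representable_metamodel_is_oplax_action (mm : Metamodel.{w} M C)
    (hrep : ∀ (X : M) (a : C), ∃ (R : C) (e : ∀ b : C, (R ⟶ b) ≃ mm.Φ X a b),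
      ∀ {b b' : C} (g : b ⟶ b') (h : R ⟶ b), e b' (h ≫ g) = mm.mapR X a g (e b h)) :
    ∃ (A : OplaxAction M C) (iso : ∀ (X : M) (a b : C), (A.act X a ⟶ b) ≃ mm.Φ X a b),
      -- naturality of the comparison isomorphism
      (∀ (X : M) (a : C) {b b' : C} (g : b ⟶ b') (h : A.act X a ⟶ b),
        iso X a b' (h ≫ g) = mm.mapR X a g (iso X a b h)) ∧
      (∀ {X Y : M} (u : X ⟶ Y) (a b : C) (h : A.act Y a ⟶ b),
        iso X a b (A.actM u a ≫ h) = mm.mapM u a b (iso Y a b h)) ∧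
      (∀ (X : M) {a a' : C} (f : a ⟶ a') (b : C) (h : A.act X a' ⟶ b),
        iso X a b (A.actC X f ≫ h) = mm.mapL X f b (iso X a' b h)) ∧
      -- compatibility with the unit and multiplication structures
      (∀ c : C, iso (𝟙_ M) c c (A.ε c) = mm.unit c) ∧
      (∀ (X Y : M) (a b c : C) (f : A.act X a ⟶ b) (g : A.act Y b ⟶ c),
        iso (Y ⊗ X) a c (A.δ X Y a ≫ A.actC Y f ≫ g) =
          mm.mult (iso Y b c g) (iso X a b f)) := by
  choose R e hnat using hrep
  let P : mm.Representation := ⟨R, e, hnat⟩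
  exact ⟨P.toOplaxAction, e, hnat, P.homEquiv_mapHom_comp, fun X _ _ f _ h =>
    P.homEquiv_mapObj_comp X f h, P.homEquiv_counit, fun X Y a _ _ f g =>
    P.homEquiv_comult_comp_mapObj_comp X Y a f g⟩
end

section
/- Let M be a monoidal category, C a category, and (Φ, φ·, φ) a metamodel of M in C. For a functor V : A → C, define P^(V)(X) = ∫_{A∈A} Φ_X(VA, VA) (the end over A). Then P^(V) : M^op → SET carries a canonical lax monoidal structure: the unit sends the point to the family ((φ·)_{VA}(∗))_A and the multiplication sends ((y_A)_A, (x_A)_A) to ((φ_{X,Y})_{VA,VA,VA}(y_A, x_A))_A; equivalently, P^(V) is a monoid object in [M^op, SET] with the Day convolution monoidal structure. -/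
open CategoryTheory CategoryTheory.MonoidalCategory

universe w v₁ v₂ v₃ u₁ u₂ u₃

variable {M : Type u₁} [Category.{v₁} M] [MonoidalCategory M]
  {C : Type u₂} [Category.{v₂} C] {A : Type u₃} [Category.{v₃} A]

/-- The end `P^(V)(X) = ∫_{a ∈ A} Φ_X(V a, V a)`: the set of families
`(x_a ∈ Φ_X(Va, Va))_a` natural in `a`. -/
def endFam (mm : Metamodel.{w} M C) (V : A ⥤ C) (X : M) :
    Set (∀ a : A, mm.Φ X (V.obj a) (V.obj a)) :=
  {x | ∀ {a a' : A} (f : a ⟶ a'),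
    mm.mapR X (V.obj a) (V.map f) (x a) = mm.mapL X (V.map f) (V.obj a') (x a')}

namespace Metamodel

variable (mm : Metamodel.{w} M C) (V : A ⥤ C)

theorem unit_mem_endFam : (fun a => mm.unit (V.obj a)) ∈ endFam mm V (𝟙_ M) :=
  fun f => (mm.unit_natural (V.map f)).symm

/-- The middle object is slid across by extranaturality (`mult_mid`), the outer ones by
naturality of `mult` (`mult_mapR`, `mult_mapL`). -/
theorem mult_mem_endFam {X Y : M} {y : ∀ a, mm.Φ Y (V.obj a) (V.obj a)}
    {x : ∀ a, mm.Φ X (V.obj a) (V.obj a)} (hy : y ∈ endFam mm V Y) (hx : x ∈ endFam mm V X) :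
    (fun a => mm.mult (y a) (x a)) ∈ endFam mm V (Y ⊗ X) := by
  intro a a' f
  calc mm.mapR (Y ⊗ X) (V.obj a) (V.map f) (mm.mult (y a) (x a))
      = mm.mult (mm.mapR Y (V.obj a) (V.map f) (y a)) (x a) := (mm.mult_mapR _ _ _).symm
    _ = mm.mult (y a') (mm.mapR X (V.obj a) (V.map f) (x a)) := by rw [hy f, mm.mult_mid]
    _ = mm.mapL (Y ⊗ X) (V.map f) (V.obj a') (mm.mult (y a') (x a')) := by
      rw [hx f, mm.mult_mapL]

theorem mapM_mem_endFam {X Y : M} (u : X ⟶ Y) {x : ∀ a, mm.Φ Y (V.obj a) (V.obj a)}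
    (hx : x ∈ endFam mm V Y) :
    (fun a => mm.mapM u (V.obj a) (V.obj a) (x a)) ∈ endFam mm V X := by
  intro a a' f
  rw [← mm.mapMR_comm, hx f, mm.mapML_comm]

end Metamodel

/-- For a metamodel `Φ` of `M` in `C` and a functor `V : A ⥤ C`, the
end `P^(V)(X) = ∫_a Φ_X(Va, Va)` carries a canonical lax monoidal structure: the unit
family and the pointwise multiplication of natural families are again natural, the
functorial action preserves naturality, and the lax monoidal unit and associativity laws
hold. -/
theorem end_lax_monoidal (mm : Metamodel.{w} M C) (V : A ⥤ C) :
    -- the unit is a natural family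
    ((fun a => mm.unit (V.obj a)) ∈ endFam mm V (𝟙_ M)) ∧
    -- the multiplication of natural families is natural
    (∀ {X Y : M} (y : ∀ a, mm.Φ Y (V.obj a) (V.obj a))
        (x : ∀ a, mm.Φ X (V.obj a) (V.obj a)),
      y ∈ endFam mm V Y → x ∈ endFam mm V X →
        (fun a => mm.mult (y a) (x a)) ∈ endFam mm V (Y ⊗ X)) ∧
    -- functoriality in `M` preserves naturality
    (∀ {X Y : M} (f : X ⟶ Y) (x : ∀ a, mm.Φ Y (V.obj a) (V.obj a)),
      x ∈ endFam mm V Y →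
        (fun a => mm.mapM f (V.obj a) (V.obj a) (x a)) ∈ endFam mm V X) ∧
    -- lax monoidal left and right unit laws
    (∀ (X : M) (x : ∀ a, mm.Φ X (V.obj a) (V.obj a)),
      (fun a => mm.mult (mm.unit (V.obj a)) (x a)) =
        (fun a => mm.mapM (λ_ X).hom (V.obj a) (V.obj a) (x a))) ∧
    (∀ (X : M) (x : ∀ a, mm.Φ X (V.obj a) (V.obj a)),
      (fun a => mm.mult (x a) (mm.unit (V.obj a))) =
        (fun a => mm.mapM (ρ_ X).hom (V.obj a) (V.obj a) (x a))) ∧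
    -- lax monoidal associativity law
    (∀ (X Y Z : M) (z : ∀ a, mm.Φ Z (V.obj a) (V.obj a))
        (y : ∀ a, mm.Φ Y (V.obj a) (V.obj a)) (x : ∀ a, mm.Φ X (V.obj a) (V.obj a)),
      (fun a => mm.mapM (α_ Z Y X).hom (V.obj a) (V.obj a)
          (mm.mult (z a) (mm.mult (y a) (x a)))) =
        (fun a => mm.mult (mm.mult (z a) (y a)) (x a))) :=
  ⟨mm.unit_mem_endFam V, fun _ _ => mm.mult_mem_endFam V, fun u _ => mm.mapM_mem_endFam V u,
    fun _ x => funext fun a => mm.left_unit (x a), fun _ x => funext fun a => mm.right_unit (x a),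
    fun _ _ _ z y x => funext fun a => mm.assoc (z a) (y a) (x a)⟩
end
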